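/- Let T ∈ C^m ⊗ C^m ⊗ C^m be 1_A-generic with T(α) : B* → C invertible. If E_α(T) := T(A*)T(α)^{-1} ⊆ End(C) is m-dimensional, abelian, and closed under composition, then T is 111-abundant (in fact 111-sharp) and concise. -/

import Mathlib

open TensorProduct

noncomputable section

namespace Paper

variable {A B C : Type*} [AddCommGroup A] [Module ℂ A]
  [AddCommGroup B] [Module ℂ B] [AddCommGroup C] [Module ℂ C]

/-- Action of `X ∈ End(A)` on the `A`-factor: `X ∘_A T = (X ⊗ Id_B ⊗ Id_C)(T)`. -/
def actA (X : Module.End ℂ A) : A ⊗[ℂ] (B ⊗[ℂ] C) →ₗ[ℂ] A ⊗[ℂ] (B ⊗[ℂ] C) :=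
  TensorProduct.map X LinearMap.id

/-- Action of `Y ∈ End(B)` on the `B`-factor. -/
def actB (Y : Module.End ℂ B) : A ⊗[ℂ] (B ⊗[ℂ] C) →ₗ[ℂ] A ⊗[ℂ] (B ⊗[ℂ] C) :=
  TensorProduct.map LinearMap.id (TensorProduct.map Y LinearMap.id)

/-- Action of `Z ∈ End(C)` on the `C`-factor. -/
def actC (Z : Module.End ℂ C) : A ⊗[ℂ] (B ⊗[ℂ] C) →ₗ[ℂ] A ⊗[ℂ] (B ⊗[ℂ] C) :=
  TensorProduct.map LinearMap.id (TensorProduct.map LinearMap.id Z)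

/-- Contraction of the `A`-factor against `α ∈ A*`: `T ↦ T(α) ∈ B ⊗ C`. -/
def contrA (α : Module.Dual ℂ A) : A ⊗[ℂ] (B ⊗[ℂ] C) →ₗ[ℂ] B ⊗[ℂ] C :=
  (TensorProduct.lid ℂ (B ⊗[ℂ] C)).toLinearMap ∘ₗ TensorProduct.map α LinearMap.id

/-- Contraction of the `B`-factor against `β ∈ B*`: `T ↦ T(β) ∈ A ⊗ C`. -/
def contrB (β : Module.Dual ℂ B) : A ⊗[ℂ] (B ⊗[ℂ] C) →ₗ[ℂ] A ⊗[ℂ] C :=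
  TensorProduct.map LinearMap.id
    ((TensorProduct.lid ℂ C).toLinearMap ∘ₗ TensorProduct.map β LinearMap.id)

/-- Contraction of the `C`-factor against `γ ∈ C*`: `T ↦ T(γ) ∈ A ⊗ B`. -/
def contrC (γ : Module.Dual ℂ C) : A ⊗[ℂ] (B ⊗[ℂ] C) →ₗ[ℂ] A ⊗[ℂ] B :=
  TensorProduct.map LinearMap.id
    ((TensorProduct.rid ℂ B).toLinearMap ∘ₗ TensorProduct.map LinearMap.id γ)

/-- A tensor is concise if all three flattening maps are injective. -/
def Concise (T : A ⊗[ℂ] (B ⊗[ℂ] C)) : Prop :=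
  Function.Injective (fun α : Module.Dual ℂ A => contrA α T) ∧
  Function.Injective (fun β : Module.Dual ℂ B => contrB β T) ∧
  Function.Injective (fun γ : Module.Dual ℂ C => contrC γ T)

/-- View an element of `M ⊗ N` as a linear map `M* → N`. -/
def toHom {M N : Type*} [AddCommGroup M] [Module ℂ M] [AddCommGroup N] [Module ℂ N] :
    M ⊗[ℂ] N →ₗ[ℂ] (Module.Dual ℂ M →ₗ[ℂ] N) :=
  (dualTensorHom ℂ (Module.Dual ℂ M) N).comp
    (TensorProduct.map (Module.Dual.eval ℂ M) LinearMap.id)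

/-- A triple `(X,Y,Z)` is compatible with `T` if `X∘_A T = Y∘_B T = Z∘_C T`. -/
def Compat (T : A ⊗[ℂ] (B ⊗[ℂ] C))
    (p : Module.End ℂ A × Module.End ℂ B × Module.End ℂ C) : Prop :=
  actA p.1 T = actB p.2.1 T ∧ actB p.2.1 T = actC p.2.2 T

/-- The subspace `T(A*) ⊗ A ⊆ A ⊗ B ⊗ C`. -/
def spanA (T : A ⊗[ℂ] (B ⊗[ℂ] C)) : Submodule ℂ (A ⊗[ℂ] (B ⊗[ℂ] C)) :=
  Submodule.span ℂ {x | ∃ (a : A) (α : Module.Dual ℂ A), x = a ⊗ₜ[ℂ] contrA α T}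

/-- The subspace `T(B*) ⊗ B ⊆ A ⊗ B ⊗ C` (factors in the correct positions). -/
def spanB (T : A ⊗[ℂ] (B ⊗[ℂ] C)) : Submodule ℂ (A ⊗[ℂ] (B ⊗[ℂ] C)) :=
  Submodule.span ℂ {x | ∃ (b : B) (β : Module.Dual ℂ B),
    x = (TensorProduct.leftComm ℂ B A C) (b ⊗ₜ[ℂ] contrB β T)}

/-- The subspace `T(C*) ⊗ C ⊆ A ⊗ B ⊗ C` (factors in the correct positions). -/
def spanC (T : A ⊗[ℂ] (B ⊗[ℂ] C)) : Submodule ℂ (A ⊗[ℂ] (B ⊗[ℂ] C)) :=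
  Submodule.span ℂ {x | ∃ (c : C) (γ : Module.Dual ℂ C),
    x = (TensorProduct.congr (LinearEquiv.refl ℂ A) (TensorProduct.comm ℂ C B))
      ((TensorProduct.leftComm ℂ C A B) (c ⊗ₜ[ℂ] contrC γ T))}

/-- The triple intersection `(T(A*)⊗A) ∩ (T(B*)⊗B) ∩ (T(C*)⊗C)`. -/
def tripleInt (T : A ⊗[ℂ] (B ⊗[ℂ] C)) : Submodule ℂ (A ⊗[ℂ] (B ⊗[ℂ] C)) :=
  spanA T ⊓ spanB T ⊓ spanC T

end Paper

namespace Stmt10Aux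
open Paper

variable {A B C M N : Type*} [AddCommGroup A] [Module ℂ A]
  [AddCommGroup B] [Module ℂ B] [AddCommGroup C] [Module ℂ C]
  [AddCommGroup M] [Module ℂ M] [AddCommGroup N] [Module ℂ N]

@[simp] lemma toHom_tmul (x : M) (n : N) (μ : Module.Dual ℂ M) :
    toHom (x ⊗ₜ[ℂ] n) μ = μ x • n := by
  simp [toHom]

@[simp] lemma contrA_tmul (α : Module.Dual ℂ A) (a : A) (u : B ⊗[ℂ] C) :
    contrA α (a ⊗ₜ[ℂ] u) = α a • u := by
  simp [contrA]

lemma toHom_bijective [FiniteDimensional ℂ M] [FiniteDimensional ℂ N] :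
    Function.Bijective (toHom (M := M) (N := N)) := by
  have h1 : Function.Bijective
      (TensorProduct.map (Module.Dual.eval ℂ M) (LinearMap.id (M := N))) := by
    have he : (TensorProduct.map (Module.Dual.eval ℂ M) (LinearMap.id (M := N)))
        = (TensorProduct.congr (Module.evalEquiv ℂ M) (LinearEquiv.refl ℂ N)).toLinearMap := by
      apply TensorProduct.ext'
      intro x y
      simp
    rw [he]
    exact (TensorProduct.congr (Module.evalEquiv ℂ M) (LinearEquiv.refl ℂ N)).bijective
  have h2 : Function.Bijective (dualTensorHom ℂ (Module.Dual ℂ M) N) := by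
    have hb := (dualTensorHomEquiv ℂ (Module.Dual ℂ M) N).bijective
    have hco : ⇑(dualTensorHomEquiv ℂ (Module.Dual ℂ M) N)
        = ⇑(dualTensorHom ℂ (Module.Dual ℂ M) N) := by
      funext x; rfl
    rwa [hco] at hb
  have h3 : toHom (M := M) (N := N) = (dualTensorHom ℂ (Module.Dual ℂ M) N).comp
      (TensorProduct.map (Module.Dual.eval ℂ M) LinearMap.id) := rfl
  rw [h3, LinearMap.coe_comp]
  exact h2.comp h1

lemma toHom_apply_eq_contrA (S : A ⊗[ℂ] (B ⊗[ℂ] C)) (α' : Module.Dual ℂ A) :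
    toHom S α' = contrA α' S := by
  induction S using TensorProduct.induction_on with
  | zero => simp
  | tmul a u => simp
  | add x y hx hy => simp [map_add, hx, hy]

lemma ext_by_contr [FiniteDimensional ℂ A] [FiniteDimensional ℂ B] [FiniteDimensional ℂ C]
    {S₁ S₂ : A ⊗[ℂ] (B ⊗[ℂ] C)}
    (h : ∀ α' : Module.Dual ℂ A, toHom (contrA α' S₁) = toHom (contrA α' S₂)) : S₁ = S₂ := by
  apply (toHom_bijective (M := A) (N := B ⊗[ℂ] C)).injective
  ext α'
  rw [toHom_apply_eq_contrA, toHom_apply_eq_contrA]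
  exact (toHom_bijective (M := B) (N := C)).injective (h α')

lemma contrA_actA (X : Module.End ℂ A) (α' : Module.Dual ℂ A) (T : A ⊗[ℂ] (B ⊗[ℂ] C)) :
    contrA α' (actA X T) = contrA (α' ∘ₗ X) T := by
  induction T using TensorProduct.induction_on with
  | zero => simp
  | tmul a u => simp [actA]
  | add x y hx hy => simp [map_add, hx, hy]

lemma contrA_actB (Y : Module.End ℂ B) (α' : Module.Dual ℂ A) (T : A ⊗[ℂ] (B ⊗[ℂ] C)) :
    contrA α' (actB Y T) = TensorProduct.map Y LinearMap.id (contrA α' T) := by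
  induction T using TensorProduct.induction_on with
  | zero => simp
  | tmul a u => simp [actB]
  | add x y hx hy => simp [map_add, hx, hy]

lemma contrA_actC (Z : Module.End ℂ C) (α' : Module.Dual ℂ A) (T : A ⊗[ℂ] (B ⊗[ℂ] C)) :
    contrA α' (actC Z T) = TensorProduct.map LinearMap.id Z (contrA α' T) := by
  induction T using TensorProduct.induction_on with
  | zero => simp
  | tmul a u => simp [actC]
  | add x y hx hy => simp [map_add, hx, hy]

lemma toHom_map_right (Z : Module.End ℂ C) (u : B ⊗[ℂ] C) :
    toHom (TensorProduct.map LinearMap.id Z u) = Z ∘ₗ toHom u := by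
  induction u using TensorProduct.induction_on with
  | zero => simp
  | tmul b c => ext β; simp
  | add x y hx hy => ext β; simp only [map_add, LinearMap.add_apply, hx, hy,
      LinearMap.comp_apply]

lemma toHom_map_left (Y : Module.End ℂ B) (u : B ⊗[ℂ] C) :
    toHom (TensorProduct.map Y LinearMap.id u) = toHom u ∘ₗ Y.dualMap := by
  induction u using TensorProduct.induction_on with
  | zero => simp
  | tmul b c => ext β; simp
  | add x y hx hy => ext β; simp only [map_add, LinearMap.add_apply, hx, hy,
      LinearMap.comp_apply]

lemma lid_map_eq_toHom (β : Module.Dual ℂ B) (u : B ⊗[ℂ] C) :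
    (TensorProduct.lid ℂ C) (TensorProduct.map β LinearMap.id u) = toHom u β := by
  induction u using TensorProduct.induction_on with
  | zero => simp
  | tmul b c => simp
  | add x y hx hy => simp [map_add, hx, hy]

lemma toHom_contrB (β : Module.Dual ℂ B) (α' : Module.Dual ℂ A) (T : A ⊗[ℂ] (B ⊗[ℂ] C)) :
    toHom (contrB β T) α' = toHom (contrA α' T) β := by
  induction T using TensorProduct.induction_on with
  | zero => simp
  | tmul a u => simp [contrB, lid_map_eq_toHom]
  | add x y hx hy => simp [map_add, hx, hy]

lemma rid_map_pair (γ : Module.Dual ℂ C) (β : Module.Dual ℂ B) (u : B ⊗[ℂ] C) :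
    β ((TensorProduct.rid ℂ B) (TensorProduct.map LinearMap.id γ u)) = γ (toHom u β) := by
  induction u using TensorProduct.induction_on with
  | zero => simp
  | tmul b c => simp [smul_eq_mul, mul_comm]
  | add x y hx hy => simp [map_add, hx, hy]

lemma contrC_pairing (γ : Module.Dual ℂ C) (α' : Module.Dual ℂ A) (β : Module.Dual ℂ B)
    (T : A ⊗[ℂ] (B ⊗[ℂ] C)) :
    β (toHom (contrC γ T) α') = γ (toHom (contrA α' T) β) := by
  induction T using TensorProduct.induction_on with
  | zero => simp
  | tmul a u => simp [contrC, rid_map_pair]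
  | add x y hx hy => simp [map_add, hx, hy]

lemma contrA_addLeft (α₁ α₂ : Module.Dual ℂ A) (T : A ⊗[ℂ] (B ⊗[ℂ] C)) :
    contrA (α₁ + α₂) T = contrA α₁ T + contrA α₂ T := by
  induction T using TensorProduct.induction_on with
  | zero => simp
  | tmul a u => simp [add_smul]
  | add x y hx hy => simp only [map_add, hx, hy]; abel

lemma contrA_smulLeft (r : ℂ) (α' : Module.Dual ℂ A) (T : A ⊗[ℂ] (B ⊗[ℂ] C)) :
    contrA (r • α') T = r • contrA α' T := by
  induction T using TensorProduct.induction_on with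
  | zero => simp
  | tmul a u => simp [smul_smul]
  | add x y hx hy => simp only [map_add, hx, hy, smul_add]

/-- The linear map `X ↦ actA X T`. -/
def PhiA (T : A ⊗[ℂ] (B ⊗[ℂ] C)) : Module.End ℂ A →ₗ[ℂ] A ⊗[ℂ] (B ⊗[ℂ] C) where
  toFun X := actA X T
  map_add' X X' := by
    simp [actA, TensorProduct.map_add_left]
  map_smul' r X := by
    simp [actA, TensorProduct.map_smul_left]

/-- The linear map `Y ↦ actB Y T`. -/
def PhiB (T : A ⊗[ℂ] (B ⊗[ℂ] C)) : Module.End ℂ B →ₗ[ℂ] A ⊗[ℂ] (B ⊗[ℂ] C) where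
  toFun Y := actB Y T
  map_add' Y Y' := by
    simp [actB, TensorProduct.map_add_left, TensorProduct.map_add_right]
  map_smul' r Y := by
    simp [actB, TensorProduct.map_smul_left, TensorProduct.map_smul_right]

/-- The linear map `Z ↦ actC Z T`. -/
def PhiC (T : A ⊗[ℂ] (B ⊗[ℂ] C)) : Module.End ℂ C →ₗ[ℂ] A ⊗[ℂ] (B ⊗[ℂ] C) where
  toFun Z := actC Z T
  map_add' Z Z' := by
    simp [actC, TensorProduct.map_add_right]
  map_smul' r Z := by
    simp [actC, TensorProduct.map_smul_right]

@[simp] lemma PhiA_apply (T : A ⊗[ℂ] (B ⊗[ℂ] C)) (X : Module.End ℂ A) :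
    PhiA T X = actA X T := rfl
@[simp] lemma PhiB_apply (T : A ⊗[ℂ] (B ⊗[ℂ] C)) (Y : Module.End ℂ B) :
    PhiB T Y = actB Y T := rfl
@[simp] lemma PhiC_apply (T : A ⊗[ℂ] (B ⊗[ℂ] C)) (Z : Module.End ℂ C) :
    PhiC T Z = actC Z T := rfl

lemma actA_dth (α' : Module.Dual ℂ A) (a : A) (T : A ⊗[ℂ] (B ⊗[ℂ] C)) :
    actA (dualTensorHom ℂ A A (α' ⊗ₜ[ℂ] a)) T = a ⊗ₜ[ℂ] contrA α' T := by
  induction T using TensorProduct.induction_on with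
  | zero => simp [actA]
  | tmul x u => simp [actA, TensorProduct.smul_tmul', TensorProduct.tmul_smul]
  | add x y hx hy => simp [map_add, TensorProduct.tmul_add, hx, hy]

lemma map_dth_left (β : Module.Dual ℂ B) (b : B) (u : B ⊗[ℂ] C) :
    TensorProduct.map (dualTensorHom ℂ B B (β ⊗ₜ[ℂ] b)) LinearMap.id u
      = b ⊗ₜ[ℂ] (TensorProduct.lid ℂ C) (TensorProduct.map β LinearMap.id u) := by
  induction u using TensorProduct.induction_on with
  | zero => simp
  | tmul x c => simp [TensorProduct.smul_tmul', TensorProduct.tmul_smul]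
  | add x y hx hy => simp [map_add, TensorProduct.tmul_add, hx, hy]

lemma actB_dth (β : Module.Dual ℂ B) (b : B) (T : A ⊗[ℂ] (B ⊗[ℂ] C)) :
    actB (dualTensorHom ℂ B B (β ⊗ₜ[ℂ] b)) T
      = (TensorProduct.leftComm ℂ B A C) (b ⊗ₜ[ℂ] contrB β T) := by
  induction T using TensorProduct.induction_on with
  | zero => simp [actB]
  | tmul a u => simp [actB, contrB, map_dth_left, TensorProduct.leftComm_tmul]
  | add x y hx hy => simp [map_add, TensorProduct.tmul_add, hx, hy]

lemma map_dth_right (γ : Module.Dual ℂ C) (c : C) (u : B ⊗[ℂ] C) :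
    TensorProduct.map LinearMap.id (dualTensorHom ℂ C C (γ ⊗ₜ[ℂ] c)) u
      = (TensorProduct.comm ℂ C B)
          (c ⊗ₜ[ℂ] (TensorProduct.rid ℂ B) (TensorProduct.map LinearMap.id γ u)) := by
  induction u using TensorProduct.induction_on with
  | zero => simp
  | tmul x y => simp [TensorProduct.smul_tmul', TensorProduct.tmul_smul]
  | add x y hx hy => simp [map_add, TensorProduct.tmul_add, hx, hy]

lemma actC_dth (γ : Module.Dual ℂ C) (c : C) (T : A ⊗[ℂ] (B ⊗[ℂ] C)) :
    actC (dualTensorHom ℂ C C (γ ⊗ₜ[ℂ] c)) T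
      = (TensorProduct.congr (LinearEquiv.refl ℂ A) (TensorProduct.comm ℂ C B))
          ((TensorProduct.leftComm ℂ C A B) (c ⊗ₜ[ℂ] contrC γ T)) := by
  induction T using TensorProduct.induction_on with
  | zero => simp [actC]
  | tmul a u =>
      simp [actC, contrC, map_dth_right, TensorProduct.leftComm_tmul,
        TensorProduct.congr_tmul]
  | add x y hx hy => simp [map_add, TensorProduct.tmul_add, hx, hy]

lemma spanA_eq_range [FiniteDimensional ℂ A] (T : A ⊗[ℂ] (B ⊗[ℂ] C)) :
    spanA T = LinearMap.range (PhiA T) := by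
  apply le_antisymm
  · rw [spanA, Submodule.span_le]
    rintro x ⟨a, α', rfl⟩
    exact ⟨dualTensorHom ℂ A A (α' ⊗ₜ[ℂ] a), actA_dth α' a T⟩
  · rintro x ⟨X, rfl⟩
    obtain ⟨w, hw⟩ : ∃ w, dualTensorHom ℂ A A w = X :=
      ⟨(dualTensorHomEquivOfBasis (Module.finBasis ℂ A)).symm X,
        dualTensorHomEquivOfBasis_symm_cancel_right _ _⟩
    rw [← hw]
    clear hw
    induction w using TensorProduct.induction_on with
    | zero => rw [map_zero, map_zero]; exact (spanA T).zero_mem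
    | tmul α' a =>
        rw [PhiA_apply, actA_dth]
        exact Submodule.subset_span ⟨a, α', rfl⟩
    | add x y hx hy => rw [map_add, map_add]; exact (spanA T).add_mem hx hy

lemma spanB_eq_range [FiniteDimensional ℂ B] (T : A ⊗[ℂ] (B ⊗[ℂ] C)) :
    spanB T = LinearMap.range (PhiB T) := by
  apply le_antisymm
  · rw [spanB, Submodule.span_le]
    rintro x ⟨b, β, rfl⟩
    exact ⟨dualTensorHom ℂ B B (β ⊗ₜ[ℂ] b), actB_dth β b T⟩
  · rintro x ⟨Y, rfl⟩
    obtain ⟨w, hw⟩ : ∃ w, dualTensorHom ℂ B B w = Y :=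
      ⟨(dualTensorHomEquivOfBasis (Module.finBasis ℂ B)).symm Y,
        dualTensorHomEquivOfBasis_symm_cancel_right _ _⟩
    rw [← hw]
    clear hw
    induction w using TensorProduct.induction_on with
    | zero => rw [map_zero, map_zero]; exact (spanB T).zero_mem
    | tmul β b =>
        rw [PhiB_apply, actB_dth]
        exact Submodule.subset_span ⟨b, β, rfl⟩
    | add x y hx hy => rw [map_add, map_add]; exact (spanB T).add_mem hx hy

lemma spanC_eq_range [FiniteDimensional ℂ C] (T : A ⊗[ℂ] (B ⊗[ℂ] C)) :
    spanC T = LinearMap.range (PhiC T) := by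
  apply le_antisymm
  · rw [spanC, Submodule.span_le]
    rintro x ⟨c, γ, rfl⟩
    exact ⟨dualTensorHom ℂ C C (γ ⊗ₜ[ℂ] c), actC_dth γ c T⟩
  · rintro x ⟨Z, rfl⟩
    obtain ⟨w, hw⟩ : ∃ w, dualTensorHom ℂ C C w = Z :=
      ⟨(dualTensorHomEquivOfBasis (Module.finBasis ℂ C)).symm Z,
        dualTensorHomEquivOfBasis_symm_cancel_right _ _⟩
    rw [← hw]
    clear hw
    induction w using TensorProduct.induction_on with
    | zero => rw [map_zero, map_zero]; exact (spanC T).zero_mem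
    | tmul γ c =>
        rw [PhiC_apply, actC_dth]
        exact Submodule.subset_span ⟨c, γ, rfl⟩
    | add x y hx hy => rw [map_add, map_add]; exact (spanC T).add_mem hx hy

/-- The linear map `α' ↦ toHom (T(α')) ∘ fi`. -/
def phi (T : A ⊗[ℂ] (B ⊗[ℂ] C)) (fi : C →ₗ[ℂ] Module.Dual ℂ B) :
    Module.Dual ℂ A →ₗ[ℂ] Module.End ℂ C where
  toFun α' := toHom (contrA α' T) ∘ₗ fi
  map_add' α₁ α₂ := by
    show toHom (contrA (α₁ + α₂) T) ∘ₗ fi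
      = toHom (contrA α₁ T) ∘ₗ fi + toHom (contrA α₂ T) ∘ₗ fi
    rw [contrA_addLeft, map_add, LinearMap.add_comp]
  map_smul' r α' := by
    show toHom (contrA (r • α') T) ∘ₗ fi = r • (toHom (contrA α' T) ∘ₗ fi)
    rw [contrA_smulLeft, map_smul, LinearMap.smul_comp]

@[simp] lemma phi_apply (T : A ⊗[ℂ] (B ⊗[ℂ] C)) (fi : C →ₗ[ℂ] Module.Dual ℂ B)
    (α' : Module.Dual ℂ A) : phi T fi α' = toHom (contrA α' T) ∘ₗ fi := rfl

/-- Transpose construction: an endomorphism of `A` whose dual map is a given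
endomorphism of the dual space. -/
def preDual [FiniteDimensional ℂ A] (g : Module.Dual ℂ A →ₗ[ℂ] Module.Dual ℂ A) :
    Module.End ℂ A :=
  (Module.evalEquiv ℂ A).symm.toLinearMap ∘ₗ g.dualMap ∘ₗ (Module.evalEquiv ℂ A).toLinearMap

lemma comp_preDual [FiniteDimensional ℂ A] (g : Module.Dual ℂ A →ₗ[ℂ] Module.Dual ℂ A)
    (α' : Module.Dual ℂ A) : α' ∘ₗ preDual g = g α' := by
  ext a
  simp [preDual, Module.apply_evalEquiv_symm_apply, Module.Dual.eval_apply]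

lemma dualMap_preDual [FiniteDimensional ℂ A] (g : Module.Dual ℂ A →ₗ[ℂ] Module.Dual ℂ A) :
    (preDual g).dualMap = g := by
  ext α' a
  have h := LinearMap.congr_fun (comp_preDual g α') a
  simpa using h

/-- Conjugation of left-multiplication by `Z` through the parametrization `φ`. -/
def gMap (φ : M →ₗ[ℂ] Module.End ℂ C) (hφ : Function.Injective φ) (Z : Module.End ℂ C)
    (hcl : ∀ x ∈ LinearMap.range φ, (LinearMap.mulLeft ℂ Z) x ∈ LinearMap.range φ) :
    M →ₗ[ℂ] M :=
  (LinearEquiv.ofInjective φ hφ).symm.toLinearMap ∘ₗ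
    ((LinearMap.mulLeft ℂ Z).restrict hcl) ∘ₗ (LinearEquiv.ofInjective φ hφ).toLinearMap

lemma phi_gMap (φ : M →ₗ[ℂ] Module.End ℂ C) (hφ : Function.Injective φ) (Z : Module.End ℂ C)
    (hcl : ∀ x ∈ LinearMap.range φ, (LinearMap.mulLeft ℂ Z) x ∈ LinearMap.range φ) (v : M) :
    φ (gMap φ hφ Z hcl v) = Z * φ v := by
  have h1 : (LinearEquiv.ofInjective φ hφ) (gMap φ hφ Z hcl v)
      = (LinearMap.mulLeft ℂ Z).restrict hcl ((LinearEquiv.ofInjective φ hφ) v) := by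
    simp [gMap]
  have h2 := congrArg Subtype.val h1
  rwa [LinearEquiv.ofInjective_apply, LinearMap.restrict_coe_apply, LinearMap.mulLeft_apply,
    LinearEquiv.ofInjective_apply] at h2

end Stmt10Aux


open Paper in
/-- if `T` is `1_A`-generic with `T(α)` invertible and
`E_α(T) = T(A*)T(α)⁻¹ ⊆ End(C)` is `m`-dimensional, abelian and closed under composition,
then `T` is 111-abundant (in fact 111-sharp) and concise. -/
theorem stmt10 {A B C : Type*} [AddCommGroup A] [Module ℂ A] [AddCommGroup B] [Module ℂ B]
    [AddCommGroup C] [Module ℂ C] [FiniteDimensional ℂ A] [FiniteDimensional ℂ B]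
    [FiniteDimensional ℂ C] (m : ℕ)
    (hA : Module.finrank ℂ A = m) (hB : Module.finrank ℂ B = m)
    (hC : Module.finrank ℂ C = m)
    (T : A ⊗[ℂ] (B ⊗[ℂ] C)) (α : Module.Dual ℂ A)
    (hα : Function.Bijective (toHom (contrA α T)))
    (hdim : Module.finrank ℂ (Submodule.span ℂ
      {e : Module.End ℂ C | ∃ α' : Module.Dual ℂ A,
        e ∘ₗ toHom (contrA α T) = toHom (contrA α' T)}) = m)
    (habelian : ∀ e ∈ {e : Module.End ℂ C | ∃ α' : Module.Dual ℂ A,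
        e ∘ₗ toHom (contrA α T) = toHom (contrA α' T)},
      ∀ f ∈ {e : Module.End ℂ C | ∃ α' : Module.Dual ℂ A,
        e ∘ₗ toHom (contrA α T) = toHom (contrA α' T)}, e * f = f * e)
    (hclosed : ∀ e ∈ {e : Module.End ℂ C | ∃ α' : Module.Dual ℂ A,
        e ∘ₗ toHom (contrA α T) = toHom (contrA α' T)},
      ∀ f ∈ {e : Module.End ℂ C | ∃ α' : Module.Dual ℂ A,
        e ∘ₗ toHom (contrA α T) = toHom (contrA α' T)},
      e * f ∈ {e : Module.End ℂ C | ∃ α' : Module.Dual ℂ A,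
        e ∘ₗ toHom (contrA α T) = toHom (contrA α' T)}) :
    m ≤ Module.finrank ℂ (tripleInt T) ∧ Module.finrank ℂ (tripleInt T) = m ∧
      Concise T := by
  classical
  open Stmt10Aux in
  · -- main proof
    let fe : Module.Dual ℂ B ≃ₗ[ℂ] C := LinearEquiv.ofBijective (toHom (contrA α T)) hα
    set φ : Module.Dual ℂ A →ₗ[ℂ] Module.End ℂ C :=
      Stmt10Aux.phi T fe.symm.toLinearMap with hφdef
    have hfs : ∀ c : C, toHom (contrA α T) (fe.symm c) = c := fun c => fe.apply_symm_apply c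
    have hMf : ∀ α' : Module.Dual ℂ A,
        φ α' ∘ₗ toHom (contrA α T) = toHom (contrA α' T) := by
      intro α'
      ext β
      show toHom (contrA α' T) (fe.symm (toHom (contrA α T) β)) = toHom (contrA α' T) β
      congr 1
      exact fe.symm_apply_apply β
    have cancel_f : ∀ {g₁ g₂ : Module.End ℂ C},
        g₁ ∘ₗ toHom (contrA α T) = g₂ ∘ₗ toHom (contrA α T) → g₁ = g₂ := by
      intro g₁ g₂ h
      ext c
      obtain ⟨β, rfl⟩ := hα.surjective c
      exact LinearMap.congr_fun h β
    have hEset : {e : Module.End ℂ C | ∃ α' : Module.Dual ℂ A,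
        e ∘ₗ toHom (contrA α T) = toHom (contrA α' T)} = ↑(LinearMap.range φ) := by
      ext e
      constructor
      · rintro ⟨α', h⟩
        exact ⟨α', cancel_f ((hMf α').trans h.symm)⟩
      · rintro ⟨α', rfl⟩
        exact ⟨α', hMf α'⟩
    rw [hEset] at hdim habelian hclosed
    rw [Submodule.span_eq] at hdim
    have hdual : Module.finrank ℂ (Module.Dual ℂ A) = m := by
      rw [Subspace.dual_finrank_eq, hA]
    have hφinj : Function.Injective φ := by
      rw [← LinearMap.ker_eq_bot]
      have hrn := LinearMap.finrank_range_add_finrank_ker φ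
      rw [hdim, hdual] at hrn
      have h0 : Module.finrank ℂ (LinearMap.ker φ) = 0 := by omega
      exact Submodule.finrank_eq_zero.mp h0
    -- conciseness
    have hconciseA : Function.Injective (fun α' : Module.Dual ℂ A => contrA α' T) := by
      intro α₁ α₂ h
      have h' : contrA α₁ T = contrA α₂ T := h
      apply hφinj
      show toHom (contrA α₁ T) ∘ₗ fe.symm.toLinearMap
        = toHom (contrA α₂ T) ∘ₗ fe.symm.toLinearMap
      rw [h']
    have hconciseB : Function.Injective (fun β : Module.Dual ℂ B => contrB β T) := by
      intro β₁ β₂ h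
      have h' : contrB β₁ T = contrB β₂ T := h
      apply hα.injective
      show toHom (contrA α T) β₁ = toHom (contrA α T) β₂
      rw [← Stmt10Aux.toHom_contrB, ← Stmt10Aux.toHom_contrB, h']
    have hconciseC : Function.Injective (fun γ : Module.Dual ℂ C => contrC γ T) := by
      intro γ₁ γ₂ h
      have h' : contrC γ₁ T = contrC γ₂ T := h
      ext c
      obtain ⟨β, rfl⟩ := hα.surjective c
      calc γ₁ (toHom (contrA α T) β)
          = β (toHom (contrC γ₁ T) α) := (Stmt10Aux.contrC_pairing γ₁ α β T).symm
        _ = β (toHom (contrC γ₂ T) α) := by rw [h']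
        _ = γ₂ (toHom (contrA α T) β) := Stmt10Aux.contrC_pairing γ₂ α β T
    have hsA := Stmt10Aux.spanA_eq_range T
    have hsB := Stmt10Aux.spanB_eq_range T
    have hsC := Stmt10Aux.spanC_eq_range T
    -- lower bound : every actC Z T with Z ∈ range φ lies in the triple intersection
    have lower : ∀ Z ∈ LinearMap.range φ, actC Z T ∈ tripleInt T := by
      intro Z hZ
      have hcl : ∀ x ∈ LinearMap.range φ,
          (LinearMap.mulLeft ℂ Z) x ∈ LinearMap.range φ := by
        intro x hx
        rw [LinearMap.mulLeft_apply]
        exact hclosed Z hZ x hx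
      refine Submodule.mem_inf.mpr ⟨Submodule.mem_inf.mpr ⟨?_, ?_⟩, ?_⟩
      · -- spanA
        rw [hsA]
        refine ⟨Stmt10Aux.preDual (Stmt10Aux.gMap φ hφinj Z hcl), ?_⟩
        show actA (Stmt10Aux.preDual (Stmt10Aux.gMap φ hφinj Z hcl)) T = actC Z T
        apply Stmt10Aux.ext_by_contr
        intro α''
        rw [Stmt10Aux.contrA_actA, Stmt10Aux.comp_preDual,
          Stmt10Aux.contrA_actC, Stmt10Aux.toHom_map_right,
          ← hMf (Stmt10Aux.gMap φ hφinj Z hcl α''), Stmt10Aux.phi_gMap, ← hMf α'']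
        ext β
        simp [Module.End.mul_apply]
      · -- spanB
        rw [hsB]
        refine ⟨Stmt10Aux.preDual
          (fe.symm.toLinearMap ∘ₗ Z ∘ₗ toHom (contrA α T)), ?_⟩
        show actB (Stmt10Aux.preDual
          (fe.symm.toLinearMap ∘ₗ Z ∘ₗ toHom (contrA α T))) T = actC Z T
        apply Stmt10Aux.ext_by_contr
        intro α''
        rw [Stmt10Aux.contrA_actB, Stmt10Aux.toHom_map_left, Stmt10Aux.dualMap_preDual,
          Stmt10Aux.contrA_actC, Stmt10Aux.toHom_map_right, ← hMf α'']
        have hcomm : φ α'' * Z = Z * φ α'' := habelian (φ α'') ⟨α'', rfl⟩ Z hZ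
        ext β
        simp only [LinearMap.comp_apply, LinearEquiv.coe_coe]
        rw [hfs]
        have := LinearMap.congr_fun hcomm (toHom (contrA α T) β)
        simpa [Module.End.mul_apply] using this
      · -- spanC
        rw [hsC]
        exact ⟨Z, rfl⟩
    -- upper bound
    have upper : ∀ S ∈ tripleInt T, ∃ Z ∈ LinearMap.range φ, actC Z T = S := by
      intro S hS
      have hS' : S ∈ spanA T ⊓ spanB T ⊓ spanC T := hS
      have hSA : S ∈ spanA T := (Submodule.mem_inf.mp (Submodule.mem_inf.mp hS').1).1
      have hSC : S ∈ spanC T := (Submodule.mem_inf.mp hS').2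
      rw [hsA] at hSA
      rw [hsC] at hSC
      obtain ⟨X, hX⟩ := hSA
      obtain ⟨Z, hZ⟩ := hSC
      have hXZ : actA X T = actC Z T := hX.trans hZ.symm
      refine ⟨Z, ⟨α ∘ₗ X, ?_⟩, hZ⟩
      apply cancel_f
      rw [hMf, ← Stmt10Aux.contrA_actA, hXZ, Stmt10Aux.contrA_actC,
        Stmt10Aux.toHom_map_right]
    have htriple : tripleInt T = Submodule.map (PhiC T) (LinearMap.range φ) := by
      apply le_antisymm
      · intro S hS
        obtain ⟨Z, hZm, hZ⟩ := upper S hS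
        exact ⟨Z, hZm, hZ⟩
      · rintro S ⟨Z, hZm, rfl⟩
        exact lower Z hZm
    have hι : Function.Injective ((PhiC T) ∘ₗ (LinearMap.range φ).subtype) := by
      rw [← LinearMap.ker_eq_bot, LinearMap.ker_eq_bot']
      intro z hz
      have hz' : actC (z : Module.End ℂ C) T = 0 := hz
      have h2 : toHom (contrA α (actC (z : Module.End ℂ C) T))
          = (0 : Module.Dual ℂ B →ₗ[ℂ] C) := by
        rw [hz']
        simp
      rw [Stmt10Aux.contrA_actC, Stmt10Aux.toHom_map_right] at h2
      have h3 : (z : Module.End ℂ C) = 0 := by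
        ext c
        obtain ⟨β, rfl⟩ := hα.surjective c
        simpa using LinearMap.congr_fun h2 β
      exact Subtype.ext h3
    have hrange : LinearMap.range ((PhiC T) ∘ₗ (LinearMap.range φ).subtype)
        = Submodule.map (PhiC T) (LinearMap.range φ) := by
      rw [LinearMap.range_comp, Submodule.range_subtype]
    have hfr : Module.finrank ℂ (tripleInt T) = m := by
      rw [htriple, ← hrange, LinearMap.finrank_range_of_inj hι]
      exact hdim
    exact ⟨hfr.ge, hfr, hconciseA, hconciseB, hconciseC⟩
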